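/- Let ℓ ≥ 1 and (s_n) be a binary sequence whose generating function over F_2 satisfies f_1(x², G(x)²) + (x^{2^ℓ}+1)G(x) + f_0(x) = 0 with deg f_0 ≤ 2^ℓ − 2. Then W(s_n, N) ≥ ⌊N/2^ℓ⌋. -/

import Mathlib

/-- The `N`th well-distribution measure of a binary sequence. -/
noncomputable def Wmeasure (s : ℕ → ZMod 2) (N : ℕ) : ℤ :=
  sSup {x : ℤ | ∃ a b t : ℕ, 1 ≤ b ∧ 1 ≤ t ∧ a + (t - 1) * b < N ∧
    x = |∑ j ∈ Finset.range t, (-1 : ℤ) ^ (s (a + j * b)).val|}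

/-!
Over `𝔽₂` squaring is the Frobenius, so `f₁(x², G²) = f₁(x, G)²` has no odd-degree terms.
Comparing odd coefficients above `deg f₀` therefore gives `s (n + 2^ℓ) = s n` for odd `n ≥ 2^ℓ - 1`
and `s (2^ℓ - 1) = 0`. Hence `s` vanishes on the progression `2^ℓ - 1 + k 2^ℓ`, and the
`⌊N/2^ℓ⌋` of its terms below `N` sum to `⌊N/2^ℓ⌋`.
-/

namespace PowerSeries

variable {p : ℕ} [Fact p.Prime]

theorem expand_zmod (f : PowerSeries (ZMod p)) :
    expand p (Fact.out : p.Prime).ne_zero f = f ^ p := by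
  have h := MvPowerSeries.map_frobenius_expand p (Fact.out : p.Prime).ne_zero (f := f)
  rwa [ZMod.frobenius_zmod, MvPowerSeries.map_id] at h

theorem coeff_pow_char_of_not_dvd (f : PowerSeries (ZMod p)) {n : ℕ} (hn : ¬ p ∣ n) :
    coeff n (f ^ p) = 0 := by
  rw [← expand_zmod, coeff_expand_of_not_dvd p _ _ hn]

end PowerSeries

theorem MvPolynomial.aeval_pow_char_zmod {σ A : Type*} {p : ℕ} [Fact p.Prime] [CommSemiring A]
    [Algebra (ZMod p) A] (x : σ → A) (f : MvPolynomial σ (ZMod p)) :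
    aeval (x ^ p) f = aeval x f ^ p := by
  rw [← aeval_expand, expand_zmod, map_pow]

theorem Polynomial.aeval_powerSeries_X {R : Type*} [CommSemiring R] (f : Polynomial R) :
    aeval (PowerSeries.X : PowerSeries R) f = f := by
  rw [← eval₂_C_X_eq_coe, aeval_def]
  rfl

theorem PowerSeries.coeff_X_pow_add_one_mul_mk {R : Type*} [Semiring R] (m n : ℕ) (s : ℕ → R) :
    coeff n ((X ^ m + 1) * mk s) = (if m ≤ n then s (n - m) else 0) + s n := by
  rw [add_mul, one_mul, map_add, coeff_X_pow_mul', coeff_mk]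
  split_ifs <;> simp only [coeff_mk]

section FunctionalEquation

open PowerSeries

variable {m : ℕ} {s : ℕ → ZMod 2} {f₁ : MvPolynomial (Fin 2) (ZMod 2)} {f₀ : Polynomial (ZMod 2)}
  (heq : MvPolynomial.aeval ![(X : PowerSeries (ZMod 2)) ^ 2, mk s ^ 2] f₁
      + ((X : PowerSeries (ZMod 2)) ^ m + 1) * mk s + Polynomial.aeval (X : PowerSeries (ZMod 2)) f₀
      = 0)
include heq

theorem coeff_X_pow_add_one_mul_mk_eq_zero_of_odd {n : ℕ} (hn : Odd n)
    (hdeg : f₀.natDegree < n) : coeff n (((X : PowerSeries (ZMod 2)) ^ m + 1) * mk s) = 0 := by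
  have hsq : ![(X : PowerSeries (ZMod 2)) ^ 2, mk s ^ 2] = ![X, mk s] ^ 2 := by
    ext i : 1
    fin_cases i <;> rfl
  have h := congrArg (coeff n) heq
  rwa [map_add, map_add, hsq, MvPolynomial.aeval_pow_char_zmod,
    coeff_pow_char_of_not_dvd _ hn.not_two_dvd_nat, Polynomial.aeval_powerSeries_X,
    Polynomial.coeff_coe, Polynomial.coeff_eq_zero_of_natDegree_lt hdeg, zero_add, add_zero,
    map_zero] at h

variable (hm : Even m) (hdeg : f₀.natDegree + 2 ≤ m)
include hm hdeg

theorem apply_sub_one_eq_zero : s (m - 1) = 0 := by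
  have hodd : Odd (m - 1) := Nat.Even.sub_odd (by omega) hm odd_one
  have h := coeff_X_pow_add_one_mul_mk_eq_zero_of_odd heq hodd (by omega)
  rwa [coeff_X_pow_add_one_mul_mk, if_neg (by omega), zero_add] at h

theorem apply_add_eq_of_odd {n : ℕ} (hn : Odd n) : s (n + m) = s n := by
  have h := coeff_X_pow_add_one_mul_mk_eq_zero_of_odd heq (hn.add_even hm) (by omega)
  rw [coeff_X_pow_add_one_mul_mk, if_pos (Nat.le_add_left m n), Nat.add_sub_cancel] at h
  exact (CharTwo.add_eq_zero.mp h).symm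

theorem apply_sub_one_add_mul_eq_zero (k : ℕ) : s (m - 1 + k * m) = 0 := by
  induction k with
  | zero => simpa using apply_sub_one_eq_zero heq hm hdeg
  | succ k ih =>
    have hodd : Odd (m - 1 + k * m) :=
      (Nat.Even.sub_odd (by omega) hm odd_one).add_even (hm.mul_left k)
    rw [add_mul, one_mul, ← add_assoc, apply_add_eq_of_odd heq hm hdeg hodd, ih]

end FunctionalEquation

section Wmeasure

variable {s : ℕ → ZMod 2} {N : ℕ}

theorem abs_sum_neg_one_pow_le_Wmeasure {a b t : ℕ} (hb : 1 ≤ b) (ht : 1 ≤ t)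
    (hlt : a + (t - 1) * b < N) :
    |∑ j ∈ Finset.range t, (-1 : ℤ) ^ (s (a + j * b)).val| ≤ Wmeasure s N := by
  refine le_csSup ⟨N, ?_⟩ ⟨a, b, t, hb, ht, hlt, rfl⟩
  rintro _ ⟨a, b, t, hb, ht, hlt, rfl⟩
  have htN : t ≤ N := by
    have := Nat.le_mul_of_pos_right (t - 1) hb
    omega
  calc _ ≤ ∑ j ∈ Finset.range t, |(-1 : ℤ) ^ (s (a + j * b)).val| :=
        Finset.abs_sum_le_sum_abs _ _
    _ = t := by simp
    _ ≤ N := by exact_mod_cast htN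

theorem Wmeasure_nonneg : 0 ≤ Wmeasure s N := by
  rcases Nat.eq_zero_or_pos N with rfl | hN
  · refine (congrArg sSup (Set.eq_empty_of_forall_notMem ?_)).trans_ge Int.csSup_empty.ge
    rintro _ ⟨a, b, t, -, -, hlt, -⟩
    omega
  · exact (abs_nonneg _).trans
      (abs_sum_neg_one_pow_le_Wmeasure (a := 0) (b := 1) (t := 1) le_rfl le_rfl (by simpa))

theorem natCast_le_Wmeasure_of_forall_eq {a b t : ℕ} {c : ZMod 2} (hb : 1 ≤ b)
    (hlt : ∀ j < t, a + j * b < N) (hc : ∀ j < t, s (a + j * b) = c) :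
    (t : ℤ) ≤ Wmeasure s N := by
  rcases Nat.eq_zero_or_pos t with rfl | ht
  · exact_mod_cast Wmeasure_nonneg
  have hsum : ∑ j ∈ Finset.range t, (-1 : ℤ) ^ (s (a + j * b)).val = t * (-1) ^ c.val := by
    rw [Finset.sum_congr rfl fun j hj => by rw [hc j (Finset.mem_range.mp hj)],
      Finset.sum_const, Finset.card_range, nsmul_eq_mul]
  calc (t : ℤ) = |∑ j ∈ Finset.range t, (-1 : ℤ) ^ (s (a + j * b)).val| := by
        rw [hsum, abs_mul, abs_pow, abs_neg, abs_one, one_pow, mul_one, Nat.abs_cast]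
    _ ≤ Wmeasure s N := abs_sum_neg_one_pow_le_Wmeasure hb ht (hlt _ (by omega))

end Wmeasure

/-- If `G = ∑ s_n x^n ∈ F₂[[x]]` satisfies `f₁(x², G²) + (x^{2^ℓ}+1)G + f₀(x) = 0`
with `deg f₀ ≤ 2^ℓ - 2` and `ℓ ≥ 1`, then `W(s, N) ≥ ⌊N/2^ℓ⌋`. -/
theorem well_distribution_of_functional_equation' (ℓ : ℕ) (hℓ : 1 ≤ ℓ) (s : ℕ → ZMod 2)
    (f₁ : MvPolynomial (Fin 2) (ZMod 2)) (f₀ : Polynomial (ZMod 2))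
    (hdeg : f₀.natDegree ≤ 2 ^ ℓ - 2)
    (heq : MvPolynomial.aeval
        ![(PowerSeries.X : PowerSeries (ZMod 2)) ^ 2, (PowerSeries.mk s) ^ 2] f₁
      + ((PowerSeries.X : PowerSeries (ZMod 2)) ^ (2 ^ ℓ) + 1) * PowerSeries.mk s
      + Polynomial.aeval (PowerSeries.X : PowerSeries (ZMod 2)) f₀ = 0) :
    ∀ N : ℕ, ((N / 2 ^ ℓ : ℕ) : ℤ) ≤ Wmeasure s N := by
  intro N
  have hm : Even (2 ^ ℓ) := (Nat.even_pow' (by omega)).2 even_two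
  have hdeg' : f₀.natDegree + 2 ≤ 2 ^ ℓ := by
    have := Nat.one_lt_two_pow (n := ℓ) (by omega)
    omega
  refine natCast_le_Wmeasure_of_forall_eq Nat.one_le_two_pow (fun j hj => ?_)
    (fun j _ => apply_sub_one_add_mul_eq_zero heq hm hdeg' j)
  have hjN : (j + 1) * 2 ^ ℓ ≤ N := (Nat.le_div_iff_mul_le (by positivity)).1 hj
  have := Nat.one_le_two_pow (n := ℓ)
  rw [add_mul, one_mul] at hjN
  omega
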